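/- Let u : [0,1] → gl(d,ℝ) and n, ν : [0,1] → ℝ^d be continuous curves such that the curves t ↦ D_u ℓ(u(t),n(t),ν(t)) and t ↦ D_ν ℓ(u(t),n(t),ν(t)) are continuously differentiable and t ↦ D_n ℓ(u(t),n(t),ν(t)) is continuous. Suppose that for every C¹ pair of variation curves ξ : [0,1] → gl(d,ℝ) and ϖ : [0,1] → ℝ^d with ξ(0) = ξ(1) = 0 and ϖ(0) = ϖ(1) = 0, the first-variation integral ∫₀¹ [ ⟨D_u ℓ, ξ'(t) − [u(t), ξ(t)]⟩ + ⟨D_n ℓ, ϖ(t) + ξ(t) n(t)⟩ + ⟨D_ν ℓ, ϖ'(t) + ξ(t) ν(t) − u(t) ϖ(t)⟩ ] dt vanishes (all derivatives of ℓ evaluated along the curves). Then for all t ∈ [0,1] the Euler–Poincaré equations hold: (d/dt) D_u ℓ + ad*_{u(t)} D_u ℓ + D_n ℓ ⋄ n(t) + D_ν ℓ ⋄ ν(t) = 0 and (d/dt) D_ν ℓ + u(t) ⋆ D_ν ℓ − D_n ℓ = 0. -/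

import Mathlib

open Set

section FundLemma
open Filter Topology
variable {E : Type*} [NormedAddCommGroup E] [NormedSpace ℝ E]

lemma fund_lemma (f : ℝ → E →L[ℝ] ℝ)
    (hf : ∀ v : E, ContinuousOn (fun t => f t v) (Icc 0 1))
    (h : ∀ g : ℝ → ℝ, ContDiff ℝ 1 g → g 0 = 0 → g 1 = 0 →
      ∀ v : E, (∫ t in (0:ℝ)..1, g t * f t v) = 0) :
    ∀ t ∈ Icc (0:ℝ) 1, f t = 0 := by
  have hint : ∀ t₀ ∈ Ioo (0:ℝ) 1, ∀ v : E, f t₀ v = 0 := by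
    intro t₀ ht₀ v
    by_contra hc
    set w : E := (f t₀ v)⁻¹ • v with hw
    have hw1 : f t₀ w = 1 := by
      simp [hw, map_smul]
      exact inv_mul_cancel₀ hc
    have hca : ContinuousAt (fun t => f t w) t₀ :=
      (hf w).continuousAt (Icc_mem_nhds ht₀.1 ht₀.2)
    have hev : ∀ᶠ t in 𝓝 t₀, (1:ℝ)/2 < f t w :=
      hca.eventually (eventually_gt_nhds (by simp only [hw1]; norm_num))
    have hev2 : ∀ᶠ t in 𝓝 t₀, t ∈ Ioo (0:ℝ) 1 := isOpen_Ioo.eventually_mem ht₀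
    obtain ⟨δ, hδpos, hδ⟩ := Metric.eventually_nhds_iff_ball.mp (hev.and hev2)
    set bump : ContDiffBump t₀ := ⟨δ/2, δ, by positivity, by linarith⟩ with hbump
    have hg0 : (bump : ℝ → ℝ) 0 = 0 := by
      apply bump.zero_of_le_dist
      by_contra hlt
      push_neg at hlt
      have := (hδ 0 (by simpa [Metric.mem_ball] using hlt)).2
      simp at this
    have hg1 : (bump : ℝ → ℝ) 1 = 0 := by
      apply bump.zero_of_le_dist
      by_contra hlt
      push_neg at hlt
      have := (hδ 1 (by simpa [Metric.mem_ball] using hlt)).2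
      simp at this
    have h0 := h bump (bump.contDiff (n := 1)) hg0 hg1 w
    set G : ℝ → ℝ := fun t => bump t * f t w with hG
    have hGcont : ContinuousOn G (Icc 0 1) := bump.continuous.continuousOn.mul (hf w)
    have hGint : IntervalIntegrable G MeasureTheory.volume 0 1 := by
      apply ContinuousOn.intervalIntegrable
      rwa [uIcc_of_le zero_le_one]
    have hGnonneg : ∀ t ∈ Icc (0:ℝ) 1, 0 ≤ G t := by
      intro t _
      by_cases hb : t ∈ Metric.ball t₀ δ
      · exact mul_nonneg bump.nonneg (le_of_lt (lt_trans (by norm_num) (hδ t hb).1))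
      · have : (bump : ℝ → ℝ) t = 0 :=
          bump.zero_of_le_dist (by simpa [Metric.mem_ball, not_lt] using hb)
        simp [hG, this]
    set a : ℝ := t₀ - δ/2 with ha
    set b : ℝ := t₀ + δ/2 with hb
    have haball : a ∈ Metric.ball t₀ δ := by
      simp only [Metric.mem_ball, Real.dist_eq, ha]
      rw [show t₀ - δ/2 - t₀ = -(δ/2) by ring, abs_neg, abs_of_nonneg (by linarith)]
      linarith
    have hbball : b ∈ Metric.ball t₀ δ := by
      simp only [Metric.mem_ball, Real.dist_eq, hb]
      rw [show t₀ + δ/2 - t₀ = δ/2 by ring, abs_of_nonneg (by linarith)]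
      linarith
    have haI : a ∈ Ioo (0:ℝ) 1 := (hδ a haball).2
    have hbI : b ∈ Ioo (0:ℝ) 1 := (hδ b hbball).2
    have hab : a < b := by rw [ha, hb]; linarith
    have hsub1 : IntervalIntegrable G MeasureTheory.volume 0 a :=
      hGint.mono_set (by rw [uIcc_of_le (le_of_lt haI.1), uIcc_of_le zero_le_one]
                         exact Icc_subset_Icc le_rfl (le_of_lt haI.2))
    have hsub2 : IntervalIntegrable G MeasureTheory.volume a b :=
      hGint.mono_set (by rw [uIcc_of_le (le_of_lt hab), uIcc_of_le zero_le_one]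
                         exact Icc_subset_Icc (le_of_lt haI.1) (le_of_lt hbI.2))
    have hsub3 : IntervalIntegrable G MeasureTheory.volume b 1 :=
      hGint.mono_set (by rw [uIcc_of_le (le_of_lt hbI.2), uIcc_of_le zero_le_one]
                         exact Icc_subset_Icc (le_of_lt hbI.1) le_rfl)
    have hsplit : (∫ t in (0:ℝ)..a, G t) + (∫ t in a..b, G t) + (∫ t in b..1, G t)
        = ∫ t in (0:ℝ)..1, G t := by
      rw [intervalIntegral.integral_add_adjacent_intervals hsub1 hsub2,
        intervalIntegral.integral_add_adjacent_intervals (hsub1.trans hsub2) hsub3]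
    have hmid : 0 < ∫ t in a..b, G t := by
      apply intervalIntegral.intervalIntegral_pos_of_pos_on hsub2 _ hab
      intro x hx
      obtain ⟨h1, h2⟩ := hx
      rw [ha] at h1; rw [hb] at h2
      have hxball : x ∈ Metric.ball t₀ δ := by
        simp only [Metric.mem_ball, Real.dist_eq]
        rw [abs_lt]; constructor <;> linarith
      have hone : (bump : ℝ → ℝ) x = 1 := by
        apply bump.one_of_mem_closedBall
        show x ∈ Metric.closedBall t₀ (δ/2)
        simp only [Metric.mem_closedBall, Real.dist_eq]
        rw [abs_le]; constructor <;> linarith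
      show 0 < G x
      simp only [hG, hone, one_mul]
      exact lt_trans (by norm_num) (hδ x hxball).1
    have hout1 : 0 ≤ ∫ t in (0:ℝ)..a, G t :=
      intervalIntegral.integral_nonneg (le_of_lt haI.1)
        (fun t ht => hGnonneg t ⟨ht.1, le_trans ht.2 (le_of_lt haI.2)⟩)
    have hout3 : 0 ≤ ∫ t in b..(1:ℝ), G t :=
      intervalIntegral.integral_nonneg (le_of_lt hbI.2)
        (fun t ht => hGnonneg t ⟨le_trans (le_of_lt hbI.1) ht.1, ht.2⟩)
    have : (0:ℝ) < ∫ t in (0:ℝ)..1, G t := by rw [← hsplit]; linarith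
    rw [h0] at this
    exact lt_irrefl 0 this
  intro t ht
  ext v
  have h1 : Tendsto (fun s => f s v) (𝓝[Ioo (0:ℝ) 1] t) (𝓝 (f t v)) :=
    ((hf v) t ht).mono_left (nhdsWithin_mono _ Ioo_subset_Icc_self)
  have h2 : Tendsto (fun s => f s v) (𝓝[Ioo (0:ℝ) 1] t) (𝓝 0) := by
    apply tendsto_const_nhds.congr'
    filter_upwards [self_mem_nhdsWithin] with s hs
    exact (hint s hs v).symm
  have hne : (𝓝[Ioo (0:ℝ) 1] t).NeBot := by
    rw [← mem_closure_iff_nhdsWithin_neBot, closure_Ioo (zero_ne_one)]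
    exact ht
  have := tendsto_nhds_unique h1 h2
  simpa using this

end FundLemma



open Set

attribute [local instance] Matrix.normedAddCommGroup Matrix.normedSpace

/-- The diamond operator `⋄ : (ℝ^d)* × ℝ^d → gl(d,ℝ)*`, `⟨σ ⋄ v, u⟩ = −⟨σ, u v⟩`. -/
noncomputable def diaM {d : ℕ} (σ : (Fin d → ℝ) →L[ℝ] ℝ) (v : Fin d → ℝ) :
    Matrix (Fin d) (Fin d) ℝ →L[ℝ] ℝ :=
  LinearMap.toContinuousLinearMap
    { toFun := fun A => - σ (A.mulVec v)
      map_add' := fun A B => by simp [Matrix.add_mulVec]; ring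
      map_smul' := fun c A => by simp [Matrix.smul_mulVec] }

/-- The star operator `⋆ : gl(d,ℝ) × (ℝ^d)* → (ℝ^d)*`, `⟨u ⋆ σ, v⟩ = ⟨σ, u v⟩`. -/
noncomputable def starM {d : ℕ} (u : Matrix (Fin d) (Fin d) ℝ)
    (σ : (Fin d → ℝ) →L[ℝ] ℝ) : (Fin d → ℝ) →L[ℝ] ℝ :=
  σ.comp (LinearMap.toContinuousLinearMap u.mulVecLin)

/-- The coadjoint operator on `gl(d,ℝ)*`: `⟨ad*_u μ, ξ⟩ = ⟨μ, [u,ξ]⟩`. -/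
noncomputable def coadM {d : ℕ} (u : Matrix (Fin d) (Fin d) ℝ)
    (μ : Matrix (Fin d) (Fin d) ℝ →L[ℝ] ℝ) : Matrix (Fin d) (Fin d) ℝ →L[ℝ] ℝ :=
  LinearMap.toContinuousLinearMap
    ((μ : Matrix (Fin d) (Fin d) ℝ →ₗ[ℝ] ℝ) ∘ₗ
      (LinearMap.mulLeft ℝ u - LinearMap.mulRight ℝ u))

/-- `D_u ℓ(u,n,ν)`, the partial Fréchet derivative of `ℓ` in its first argument. -/
noncomputable def D1 {d : ℕ} (ℓ : Matrix (Fin d) (Fin d) ℝ × (Fin d → ℝ) × (Fin d → ℝ) → ℝ)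
    (u : Matrix (Fin d) (Fin d) ℝ) (n ν : Fin d → ℝ) : Matrix (Fin d) (Fin d) ℝ →L[ℝ] ℝ :=
  fderiv ℝ (fun u' => ℓ (u', n, ν)) u

/-- `D_n ℓ(u,n,ν)`, the partial Fréchet derivative of `ℓ` in its second argument. -/
noncomputable def D2 {d : ℕ} (ℓ : Matrix (Fin d) (Fin d) ℝ × (Fin d → ℝ) × (Fin d → ℝ) → ℝ)
    (u : Matrix (Fin d) (Fin d) ℝ) (n ν : Fin d → ℝ) : (Fin d → ℝ) →L[ℝ] ℝ :=
  fderiv ℝ (fun n' => ℓ (u, n', ν)) n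

/-- `D_ν ℓ(u,n,ν)`, the partial Fréchet derivative of `ℓ` in its third argument. -/
noncomputable def D3 {d : ℕ} (ℓ : Matrix (Fin d) (Fin d) ℝ × (Fin d → ℝ) × (Fin d → ℝ) → ℝ)
    (u : Matrix (Fin d) (Fin d) ℝ) (n ν : Fin d → ℝ) : (Fin d → ℝ) →L[ℝ] ℝ :=
  fderiv ℝ (fun ν' => ℓ (u, n, ν')) ν

noncomputable instance matCLMNormedAddCommGroup {d : ℕ} :
    NormedAddCommGroup (Matrix (Fin d) (Fin d) ℝ →L[ℝ] ℝ) :=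
  ContinuousLinearMap.toNormedAddCommGroup

noncomputable instance matCLMNormedSpace {d : ℕ} :
    NormedSpace ℝ (Matrix (Fin d) (Fin d) ℝ →L[ℝ] ℝ) :=
  ContinuousLinearMap.toNormedSpace

/-- Vanishing of the first variation for all admissible variations `(ξ, ϖ)` implies
the metamorphosis Euler–Poincaré equations. -/
theorem euler_poincare_from_first_variation {d : ℕ}
    (ℓ : Matrix (Fin d) (Fin d) ℝ × (Fin d → ℝ) × (Fin d → ℝ) → ℝ)
    (hℓ : ContDiff ℝ 1 ℓ)
    (u : ℝ → Matrix (Fin d) (Fin d) ℝ) (n ν : ℝ → Fin d → ℝ)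
    (hu : ContinuousOn u (Icc 0 1)) (hn : ContinuousOn n (Icc 0 1))
    (hν : ContinuousOn ν (Icc 0 1))
    (hmu : ContDiffOn ℝ 1 (fun t => D1 ℓ (u t) (n t) (ν t)) (Icc 0 1))
    (hmν : ContDiffOn ℝ 1 (fun t => D3 ℓ (u t) (n t) (ν t)) (Icc 0 1))
    (hmn : ContinuousOn (fun t => D2 ℓ (u t) (n t) (ν t)) (Icc 0 1))
    (hvar : ∀ (ξ : ℝ → Matrix (Fin d) (Fin d) ℝ) (ϖ : ℝ → Fin d → ℝ),
      ContDiffOn ℝ 1 ξ (Icc 0 1) → ContDiffOn ℝ 1 ϖ (Icc 0 1) →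
      ξ 0 = 0 → ξ 1 = 0 → ϖ 0 = 0 → ϖ 1 = 0 →
      (∫ t in (0:ℝ)..1,
        ((D1 ℓ (u t) (n t) (ν t)) (derivWithin ξ (Icc 0 1) t - (u t * ξ t - ξ t * u t))
         + (D2 ℓ (u t) (n t) (ν t)) (ϖ t + (ξ t).mulVec (n t))
         + (D3 ℓ (u t) (n t) (ν t))
             (derivWithin ϖ (Icc 0 1) t + (ξ t).mulVec (ν t) - (u t).mulVec (ϖ t)))) = 0) :
    ∀ t ∈ Icc (0:ℝ) 1,
      (derivWithin (fun τ => D1 ℓ (u τ) (n τ) (ν τ)) (Icc 0 1) t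
        + coadM (u t) (D1 ℓ (u t) (n t) (ν t))
        + diaM (D2 ℓ (u t) (n t) (ν t)) (n t)
        + diaM (D3 ℓ (u t) (n t) (ν t)) (ν t) = 0)
      ∧ (derivWithin (fun τ => D3 ℓ (u τ) (n τ) (ν τ)) (Icc 0 1) t
        + starM (u t) (D3 ℓ (u t) (n t) (ν t))
        - D2 ℓ (u t) (n t) (ν t) = 0) := by
  have ud : UniqueDiffOn ℝ (Icc (0:ℝ) 1) := uniqueDiffOn_Icc one_pos
  set m : ℝ → Matrix (Fin d) (Fin d) ℝ →L[ℝ] ℝ := fun t => D1 ℓ (u t) (n t) (ν t) with hm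
  set q : ℝ → (Fin d → ℝ) →L[ℝ] ℝ := fun t => D2 ℓ (u t) (n t) (ν t) with hq
  set p : ℝ → (Fin d → ℝ) →L[ℝ] ℝ := fun t => D3 ℓ (u t) (n t) (ν t) with hp
  set m' : ℝ → Matrix (Fin d) (Fin d) ℝ →L[ℝ] ℝ := derivWithin m (Icc 0 1) with hm'
  set p' : ℝ → (Fin d → ℝ) →L[ℝ] ℝ := derivWithin p (Icc 0 1) with hp'
  have hdm : ∀ t ∈ Icc (0:ℝ) 1, HasDerivWithinAt m (m' t) (Icc 0 1) t :=
    fun t ht => ((hmu.differentiableOn one_ne_zero) t ht).hasDerivWithinAt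
  have hdp : ∀ t ∈ Icc (0:ℝ) 1, HasDerivWithinAt p (p' t) (Icc 0 1) t :=
    fun t ht => ((hmν.differentiableOn one_ne_zero) t ht).hasDerivWithinAt
  have hm'c : ContinuousOn m' (Icc 0 1) := hmu.continuousOn_derivWithin ud le_rfl
  have hp'c : ContinuousOn p' (Icc 0 1) := hmν.continuousOn_derivWithin ud le_rfl
  have hmc : ContinuousOn m (Icc 0 1) := hmu.continuousOn
  have hpc : ContinuousOn p (Icc 0 1) := hmν.continuousOn
  -- first Euler–Poincaré equation
  set A : ℝ → Matrix (Fin d) (Fin d) ℝ →L[ℝ] ℝ := fun t =>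
    m' t + coadM (u t) (m t) + diaM (q t) (n t) + diaM (p t) (ν t) with hA
  set B : ℝ → (Fin d → ℝ) →L[ℝ] ℝ := fun t =>
    p' t + starM (u t) (p t) - q t with hB
  have hAc : ∀ M, ContinuousOn (fun t => A t M) (Icc 0 1) := by
    intro M
    have c1 : ContinuousOn (fun t => u t * M - M * u t) (Icc 0 1) := by
      have := ((LinearMap.mulRight ℝ M - LinearMap.mulLeft ℝ M).continuous_of_finiteDimensional).comp_continuousOn hu
      simpa [Function.comp_def] using this
    have c2 : ContinuousOn (fun t => M.mulVec (n t)) (Icc 0 1) := by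
      have := (M.mulVecLin.continuous_of_finiteDimensional).comp_continuousOn hn
      simpa [Function.comp_def] using this
    have c3 : ContinuousOn (fun t => M.mulVec (ν t)) (Icc 0 1) := by
      have := (M.mulVecLin.continuous_of_finiteDimensional).comp_continuousOn hν
      simpa [Function.comp_def] using this
    have : ContinuousOn (fun t => m' t M + m t (u t * M - M * u t)
        + -(q t (M.mulVec (n t))) + -(p t (M.mulVec (ν t)))) (Icc 0 1) :=
      (((hm'c.clm_apply continuousOn_const).add (hmc.clm_apply c1)).add
        (hmn.clm_apply c2).neg).add (hpc.clm_apply c3).neg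
    exact this.congr fun t ht => by simp [hA, coadM, diaM]
  have hBc : ∀ v, ContinuousOn (fun t => B t v) (Icc 0 1) := by
    intro v
    have c1 : ContinuousOn (fun t => (u t).mulVec v) (Icc 0 1) := by
      exact (LinearMap.continuous_of_finiteDimensional
        ({ toFun := fun X : Matrix (Fin d) (Fin d) ℝ => X.mulVec v
           map_add' := fun X Y => Matrix.add_mulVec X Y v
           map_smul' := fun c X => Matrix.smul_mulVec c X v } :
          Matrix (Fin d) (Fin d) ℝ →ₗ[ℝ] (Fin d → ℝ))).comp_continuousOn hu
    have : ContinuousOn (fun t => p' t v + p t ((u t).mulVec v) - q t v) (Icc 0 1) :=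
      ((hp'c.clm_apply continuousOn_const).add (hpc.clm_apply c1)).sub
        (hmn.clm_apply continuousOn_const)
    exact this.congr fun t ht => by simp [hB, starM]
  have key1 : ∀ g : ℝ → ℝ, ContDiff ℝ 1 g → g 0 = 0 → g 1 = 0 →
      ∀ M : Matrix (Fin d) (Fin d) ℝ, (∫ t in (0:ℝ)..1, g t * A t M) = 0 := by
    intro g hg hg0 hg1 M
    set ξ : ℝ → Matrix (Fin d) (Fin d) ℝ := fun t => g t • M with hξdef
    have hξ : ContDiffOn ℝ 1 ξ (Icc 0 1) := (hg.smul contDiff_const).contDiffOn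
    have hξd : ∀ t : ℝ, HasDerivAt ξ (deriv g t • M) t := fun t =>
      ((hg.differentiable one_ne_zero).differentiableAt.hasDerivAt).smul_const M
    have hξdW : ∀ t ∈ Icc (0:ℝ) 1, derivWithin ξ (Icc 0 1) t = deriv g t • M :=
      fun t ht => ((hξd t).hasDerivWithinAt).derivWithin (ud t ht)
    have h0 := hvar ξ (fun _ => 0) hξ contDiffOn_const
      (by simp [hξdef, hg0]) (by simp [hξdef, hg1]) rfl rfl
    set I' : ℝ → ℝ := fun t => m t (deriv g t • M) - g t * m t (u t * M - M * u t)
      + g t * q t (M.mulVec (n t)) + g t * p t (M.mulVec (ν t)) with hI'def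
    have hEq0 : EqOn (fun t => m t (derivWithin ξ (Icc 0 1) t - (u t * ξ t - ξ t * u t))
        + q t ((fun _ => (0:Fin d → ℝ)) t + (ξ t).mulVec (n t))
        + p t (derivWithin (fun _ => (0:Fin d → ℝ)) (Icc 0 1) t + (ξ t).mulVec (ν t)
            - (u t).mulVec ((fun _ => (0:Fin d → ℝ)) t))) I' (uIcc 0 1) := by
      intro t ht
      rw [uIcc_of_le zero_le_one] at ht
      simp only [hξdW t ht]
      simp only [hξdW t ht, hI'def, hξdef, derivWithin_fun_const (Icc (0:ℝ) 1) (0:Fin d → ℝ)]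
      simp [Matrix.smul_mulVec, mul_smul_comm, smul_mul_assoc, smul_eq_mul,
        map_smul, map_sub, map_add, Matrix.mulVec_zero]
      ring
    have hI0 : (∫ t in (0:ℝ)..1, I' t) = 0 := by
      rw [← intervalIntegral.integral_congr hEq0]; exact h0
    set F : ℝ → ℝ := fun t => m t (g t • M) with hFdef
    set F' : ℝ → ℝ := fun t => m' t (g t • M) + m t (deriv g t • M) with hF'def
    have hFd : ∀ t ∈ Icc (0:ℝ) 1, HasDerivWithinAt F (F' t) (Icc 0 1) t :=
      fun t ht => (hdm t ht).clm_apply ((hξd t).hasDerivWithinAt)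
    have hF'c : ContinuousOn F' (Icc 0 1) :=
      (hm'c.clm_apply ((hg.continuous.continuousOn).smul continuousOn_const)).add
        (hmc.clm_apply (((hg.continuous_deriv le_rfl).continuousOn).smul continuousOn_const))
    have hF'int : IntervalIntegrable F' MeasureTheory.volume 0 1 := by
      apply ContinuousOn.intervalIntegrable; rwa [uIcc_of_le zero_le_one]
    have hFTC : (∫ t in (0:ℝ)..1, F' t) = 0 := by
      rw [intervalIntegral.integral_eq_sub_of_hasDeriv_right_of_le zero_le_one
        (hmc.clm_apply ((hg.continuous.continuousOn).smul continuousOn_const))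
        (fun x hx => ((hFd x (Ioo_subset_Icc_self hx)).hasDerivAt
          (Icc_mem_nhds hx.1 hx.2)).hasDerivWithinAt) hF'int]
      simp [hFdef, hg0, hg1]
      erw [(m 1).map_zero, (m 0).map_zero, sub_self]
    have hI'c : ContinuousOn I' (Icc 0 1) := by
      have c1 : ContinuousOn (fun t => u t * M - M * u t) (Icc 0 1) := by
        have := ((LinearMap.mulRight ℝ M - LinearMap.mulLeft ℝ M).continuous_of_finiteDimensional).comp_continuousOn hu
        simpa [Function.comp_def] using this
      have c2 : ContinuousOn (fun t => M.mulVec (n t)) (Icc 0 1) := by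
        have := (M.mulVecLin.continuous_of_finiteDimensional).comp_continuousOn hn
        simpa [Function.comp_def] using this
      have c3 : ContinuousOn (fun t => M.mulVec (ν t)) (Icc 0 1) := by
        have := (M.mulVecLin.continuous_of_finiteDimensional).comp_continuousOn hν
        simpa [Function.comp_def] using this
      exact (((hmc.clm_apply (((hg.continuous_deriv le_rfl).continuousOn).smul
          continuousOn_const)).sub
        ((hg.continuous.continuousOn).mul (hmc.clm_apply c1))).add
        ((hg.continuous.continuousOn).mul (hmn.clm_apply c2))).add
        ((hg.continuous.continuousOn).mul (hpc.clm_apply c3))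
    have hI'int : IntervalIntegrable I' MeasureTheory.volume 0 1 := by
      apply ContinuousOn.intervalIntegrable; rwa [uIcc_of_le zero_le_one]
    have hEq1 : EqOn (fun t => g t * A t M) (fun t => F' t - I' t) (uIcc 0 1) := by
      intro t ht
      rw [uIcc_of_le zero_le_one] at ht
      simp only [hA, hI'def, hF'def, ContinuousLinearMap.add_apply]
      simp [coadM, diaM, map_smul, map_sub, smul_eq_mul]
      ring
    rw [intervalIntegral.integral_congr hEq1, intervalIntegral.integral_sub hF'int hI'int,
      hFTC, hI0, sub_zero]
  have key2 : ∀ g : ℝ → ℝ, ContDiff ℝ 1 g → g 0 = 0 → g 1 = 0 →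
      ∀ v : Fin d → ℝ, (∫ t in (0:ℝ)..1, g t * B t v) = 0 := by
    intro g hg hg0 hg1 v
    set ϖ : ℝ → Fin d → ℝ := fun t => g t • v with hϖdef
    have hϖ : ContDiffOn ℝ 1 ϖ (Icc 0 1) := (hg.smul contDiff_const).contDiffOn
    have hϖd : ∀ t : ℝ, HasDerivAt ϖ (deriv g t • v) t := fun t =>
      ((hg.differentiable one_ne_zero).differentiableAt.hasDerivAt).smul_const v
    have hϖdW : ∀ t ∈ Icc (0:ℝ) 1, derivWithin ϖ (Icc 0 1) t = deriv g t • v :=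
      fun t ht => ((hϖd t).hasDerivWithinAt).derivWithin (ud t ht)
    have h0 := hvar (fun _ => 0) ϖ contDiffOn_const hϖ rfl rfl
      (by simp [hϖdef, hg0]) (by simp [hϖdef, hg1])
    set I' : ℝ → ℝ := fun t => g t * q t v + p t (deriv g t • v)
      - g t * p t ((u t).mulVec v) with hI'def
    have hEq0 : EqOn (fun t => m t (derivWithin (fun _ => (0:Matrix (Fin d) (Fin d) ℝ)) (Icc 0 1) t
          - (u t * (fun _ => (0:Matrix (Fin d) (Fin d) ℝ)) t
            - (fun _ => (0:Matrix (Fin d) (Fin d) ℝ)) t * u t))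
        + q t (ϖ t + ((fun _ => (0:Matrix (Fin d) (Fin d) ℝ)) t).mulVec (n t))
        + p t (derivWithin ϖ (Icc 0 1) t + ((fun _ => (0:Matrix (Fin d) (Fin d) ℝ)) t).mulVec (ν t)
            - (u t).mulVec (ϖ t))) I' (uIcc 0 1) := by
      intro t ht
      rw [uIcc_of_le zero_le_one] at ht
      simp only [hϖdW t ht, derivWithin_fun_const]
      simp only [hϖdW t ht, hI'def, hϖdef,
        derivWithin_fun_const (Icc (0:ℝ) 1) (0:Matrix (Fin d) (Fin d) ℝ)]
      simp [Matrix.zero_mulVec, Matrix.mulVec_smul, map_smul, map_sub, map_add, smul_eq_mul]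
      erw [derivWithin_fun_const, Pi.zero_apply, (m t).map_zero, zero_add]
      ring
    have hI0 : (∫ t in (0:ℝ)..1, I' t) = 0 := by
      rw [← intervalIntegral.integral_congr hEq0]; exact h0
    set F : ℝ → ℝ := fun t => p t (g t • v) with hFdef
    set F' : ℝ → ℝ := fun t => p' t (g t • v) + p t (deriv g t • v) with hF'def
    have hFd : ∀ t ∈ Icc (0:ℝ) 1, HasDerivWithinAt F (F' t) (Icc 0 1) t :=
      fun t ht => (hdp t ht).clm_apply ((hϖd t).hasDerivWithinAt)
    have hF'c : ContinuousOn F' (Icc 0 1) :=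
      (hp'c.clm_apply ((hg.continuous.continuousOn).smul continuousOn_const)).add
        (hpc.clm_apply (((hg.continuous_deriv le_rfl).continuousOn).smul continuousOn_const))
    have hF'int : IntervalIntegrable F' MeasureTheory.volume 0 1 := by
      apply ContinuousOn.intervalIntegrable; rwa [uIcc_of_le zero_le_one]
    have hFTC : (∫ t in (0:ℝ)..1, F' t) = 0 := by
      rw [intervalIntegral.integral_eq_sub_of_hasDeriv_right_of_le zero_le_one
        (hpc.clm_apply ((hg.continuous.continuousOn).smul continuousOn_const))
        (fun x hx => ((hFd x (Ioo_subset_Icc_self hx)).hasDerivAt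
          (Icc_mem_nhds hx.1 hx.2)).hasDerivWithinAt) hF'int]
      simp [hFdef, hg0, hg1]
    have hI'c : ContinuousOn I' (Icc 0 1) := by
      have c1 : ContinuousOn (fun t => (u t).mulVec v) (Icc 0 1) := by
        exact (LinearMap.continuous_of_finiteDimensional
          ({ toFun := fun X : Matrix (Fin d) (Fin d) ℝ => X.mulVec v
             map_add' := fun X Y => Matrix.add_mulVec X Y v
             map_smul' := fun c X => Matrix.smul_mulVec c X v } :
            Matrix (Fin d) (Fin d) ℝ →ₗ[ℝ] (Fin d → ℝ))).comp_continuousOn hu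
      exact (((hg.continuous.continuousOn).mul (hmn.clm_apply continuousOn_const)).add
        (hpc.clm_apply (((hg.continuous_deriv le_rfl).continuousOn).smul continuousOn_const))).sub
        ((hg.continuous.continuousOn).mul (hpc.clm_apply c1))
    have hI'int : IntervalIntegrable I' MeasureTheory.volume 0 1 := by
      apply ContinuousOn.intervalIntegrable; rwa [uIcc_of_le zero_le_one]
    have hEq1 : EqOn (fun t => g t * B t v) (fun t => F' t - I' t) (uIcc 0 1) := by
      intro t ht
      rw [uIcc_of_le zero_le_one] at ht
      simp only [hB, hI'def, hF'def, ContinuousLinearMap.add_apply,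
        ContinuousLinearMap.sub_apply]
      simp [starM, map_smul, smul_eq_mul]
      ring
    rw [intervalIntegral.integral_congr hEq1, intervalIntegral.integral_sub hF'int hI'int,
      hFTC, hI0, sub_zero]
  have hAz := fund_lemma A hAc key1
  have hBz := fund_lemma B hBc key2
  intro t ht
  exact ⟨hAz t ht, hBz t ht⟩
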